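/- Abstract continuation/Grönwall argument (the core of Section 4.4): let T > 0, η > 0, K ≥ 0, let D : [0,T] → [0,∞) be integrable, set E := exp(∫₀^T D(t)dt), and let N : [0,T] → [0,∞) be continuous and nondecreasing with N(0) ≤ η. Assume that 16 K η E² ≤ 1 and that for every τ ∈ [0,T] with N(τ) ≤ 4ηE one has N(τ) ≤ η + ∫₀^τ D(t) N(t) dt + K (sup_{t∈[0,τ]} N(t))². Then N(τ) ≤ 2ηE for all τ ∈ [0,T]. -/

import Mathlib

/-!
Bootstrap with the Grönwall weight `g t = exp (∫₀ᵗ D)`. Fix `c ∈ (2η, 4η]`. If `N ≤ c g` on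
`[0, t]`, then `N t ≤ 4ηE`, so the recursive inequality applies; its quadratic term is at most
`K (4ηE)² ≤ η`, and `∫₀ᵗ D N ≤ c ∫₀ᵗ D g ≤ c (g t - 1)`, whence `N t ≤ c g t - (c - 2η) < c g t`.
Continuous induction from `N 0 ≤ η < c` propagates `N ≤ c g` over `[0, T]`, and letting `c ↓ 2η`
gives `N ≤ 2η g ≤ 2ηE`.
-/

open MeasureTheory Set Filter Topology

lemma monotoneOn_integral_of_nonneg {f : ℝ → ℝ} {a b : ℝ} (hf : IntervalIntegrable f volume a b)
    (hf₀ : ∀ x ∈ Icc a b, 0 ≤ f x) : MonotoneOn (fun x ↦ ∫ t in a..x, f t) (Icc a b) := by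
  intro x hx y hy hxy
  have hfa : ∀ z ∈ Icc a b, IntervalIntegrable f volume a z := fun z hz ↦
    hf.mono_set (uIcc_subset_uIcc left_mem_uIcc (Icc_subset_uIcc hz))
  rw [← sub_nonneg, intervalIntegral.integral_interval_sub_left (hfa y hy) (hfa x hx)]
  exact intervalIntegral.integral_nonneg hxy fun t ht ↦ hf₀ t ⟨hx.1.trans ht.1, ht.2.trans hy.2⟩

/-- `exp ∘ ∫ₐ f` is monotone with derivative `f · exp (∫ₐ f)` almost everywhere, and the integral of
the a.e. derivative of a monotone function is at most its increment. -/
lemma integral_mul_exp_integral_le {f : ℝ → ℝ} {a b : ℝ} (hab : a ≤ b)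
    (hf : IntervalIntegrable f volume a b) (hf₀ : ∀ x ∈ Icc a b, 0 ≤ f x) :
    ∫ x in a..b, f x * Real.exp (∫ t in a..x, f t) ≤ Real.exp (∫ t in a..b, f t) - 1 := by
  set g : ℝ → ℝ := fun x ↦ Real.exp (∫ t in a..x, f t)
  have hg : MonotoneOn g (uIcc a b) := by
    rw [uIcc_of_le hab]
    exact Real.exp_monotone.comp_monotoneOn (monotoneOn_integral_of_nonneg hf hf₀)
  have hderiv : ∀ᵐ x, x ∈ uIoc a b → f x * g x = deriv g x := by
    filter_upwards [hf.ae_hasDerivAt_integral] with x hx hxab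
    rw [(hx (uIoc_subset_uIcc hxab) a left_mem_uIcc).exp.deriv, mul_comm]
  rw [intervalIntegral.integral_congr_ae hderiv]
  have := hg.intervalIntegral_deriv_mem_uIcc
  rw [uIcc_of_le (sub_nonneg.2 (hg left_mem_uIcc right_mem_uIcc hab))] at this
  simpa [g] using this.2

lemma integral_mul_le_of_le_mul_exp_integral {f u : ℝ → ℝ} {a b c : ℝ} (hab : a ≤ b)
    (hf : IntervalIntegrable f volume a b) (hf₀ : ∀ x ∈ Icc a b, 0 ≤ f x)
    (hu : ContinuousOn u (Icc a b)) (hc : 0 ≤ c)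
    (hle : ∀ x ∈ Icc a b, u x ≤ c * Real.exp (∫ t in a..x, f t)) :
    ∫ x in a..b, f x * u x ≤ c * (Real.exp (∫ t in a..b, f t) - 1) := by
  rw [← uIcc_of_le hab] at hu
  have hg : ContinuousOn (fun x ↦ c * Real.exp (∫ t in a..x, f t)) (uIcc a b) :=
    continuousOn_const.mul (intervalIntegral.continuousOn_primitive_interval' hf left_mem_uIcc).rexp
  calc ∫ x in a..b, f x * u x
      ≤ ∫ x in a..b, f x * (c * Real.exp (∫ t in a..x, f t)) :=
        intervalIntegral.integral_mono_on hab (hf.mul_continuousOn hu) (hf.mul_continuousOn hg)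
          fun x hx ↦ mul_le_mul_of_nonneg_left (hle x hx) (hf₀ x hx)
    _ = c * ∫ x in a..b, f x * Real.exp (∫ t in a..x, f t) := by
        rw [← intervalIntegral.integral_const_mul]
        simp only [mul_left_comm]
    _ ≤ c * (Real.exp (∫ t in a..b, f t) - 1) :=
        mul_le_mul_of_nonneg_left (integral_mul_exp_integral_le hab hf hf₀) hc

theorem lt_mul_exp_integral_of_le_mul_exp_integral {η K E c t : ℝ} {D N : ℝ → ℝ}
    (hη : 0 < η) (hK : 0 ≤ K) (ht : 0 ≤ t) (hc : c ∈ Ioc (2 * η) (4 * η))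
    (hD : IntervalIntegrable D volume 0 t) (hD₀ : ∀ s ∈ Icc 0 t, 0 ≤ D s)
    (hN : ContinuousOn N (Icc 0 t)) (hN_mono : MonotoneOn N (Icc 0 t)) (hN₀ : 0 ≤ N t)
    (hE : Real.exp (∫ s in (0 : ℝ)..t, D s) ≤ E) (hsmall : 16 * K * η * E ^ 2 ≤ 1)
    (hrec : N t ≤ 4 * η * E →
      N t ≤ η + (∫ s in (0 : ℝ)..t, D s * N s) + K * sSup (N '' Icc 0 t) ^ 2)
    (hle : ∀ s ∈ Icc 0 t, N s ≤ c * Real.exp (∫ r in (0 : ℝ)..s, D r)) :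
    N t < c * Real.exp (∫ s in (0 : ℝ)..t, D s) := by
  have hN4 : N t ≤ 4 * η * E := (hle t (right_mem_Icc.2 ht)).trans <|
    mul_le_mul hc.2 hE (Real.exp_nonneg _) (by positivity)
  have hsup : sSup (N '' Icc 0 t) = N t := (hN_mono.map_isGreatest (isGreatest_Icc ht)).csSup_eq
  have hquad : K * N t ^ 2 ≤ η :=
    calc K * N t ^ 2 ≤ K * (4 * η * E) ^ 2 := by gcongr
      _ = η * (16 * K * η * E ^ 2) := by ring
      _ ≤ η := mul_le_of_le_one_right hη.le hsmall
  have hint : ∫ s in (0 : ℝ)..t, D s * N s ≤ c * (Real.exp (∫ s in (0 : ℝ)..t, D s) - 1) :=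
    integral_mul_le_of_le_mul_exp_integral ht hD hD₀ hN (by linarith [hc.1]) hle
  have := hrec hN4
  rw [hsup] at this
  linarith [hc.1]

theorem le_on_Icc_of_forall_le_imp_lt {α β : Type*} [ConditionallyCompleteLinearOrder α]
    [TopologicalSpace α] [OrderTopology α] [DenselyOrdered α] [LinearOrder β]
    [TopologicalSpace β] [OrderClosedTopology β] {u v : α → β} {a b : α}
    (hu : ContinuousOn u (Icc a b)) (hv : ContinuousOn v (Icc a b)) (ha : u a ≤ v a)
    (hstep : ∀ t ∈ Icc a b, (∀ s ∈ Icc a t, u s ≤ v s) → u t < v t) :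
    ∀ t ∈ Icc a b, u t ≤ v t := by
  have hclosed : IsClosed ({t | u t ≤ v t} ∩ Icc a b) := by
    rw [inter_comm]
    exact (hu.prodMk hv).preimage_isClosed_of_isClosed isClosed_Icc
      (isClosed_le continuous_fst continuous_snd)
  refine fun t ht ↦ hclosed.Icc_subset_of_forall_mem_nhdsGT_of_Icc_subset ha
    (fun t ht hIcc ↦ ?_) ht
  have hlt : ∀ᶠ s in 𝓝[Icc a b] t, u s < v s :=
    (hu t (Ico_subset_Icc_self ht)).eventually_lt (hv t (Ico_subset_Icc_self ht))
      (hstep t (Ico_subset_Icc_self ht) hIcc)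
  have hIcc_mem : Icc a b ∈ 𝓝[>] t :=
    mem_of_superset (Ioo_mem_nhdsGT ht.2) (Ioo_subset_Icc_self.trans (Icc_subset_Icc_left ht.1))
  exact (hlt.filter_mono (nhdsWithin_le_of_mem hIcc_mem)).mono fun s hs ↦ hs.le

lemma le_mul_of_forall_Ioc_le_mul {x y a b : ℝ} (hab : a < b) (h : ∀ c ∈ Ioc a b, x ≤ c * y) :
    x ≤ a * y :=
  ge_of_tendsto (((continuous_mul_const y).tendsto a).mono_left nhdsWithin_le_nhds) <|
    eventually_of_mem (Ioc_mem_nhdsGT hab) h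

theorem continuation_gronwall_argument_general
    (T η K : ℝ) (hη : 0 < η) (hK : 0 ≤ K)
    (D : ℝ → ℝ) (hDpos : ∀ t ∈ Set.Icc (0 : ℝ) T, 0 ≤ D t)
    (hDint : IntegrableOn D (Set.Icc (0 : ℝ) T))
    (E : ℝ) (hE : E = Real.exp (∫ t in (0 : ℝ)..T, D t))
    (N : ℝ → ℝ)
    (hNcont : ContinuousOn N (Set.Icc (0 : ℝ) T))
    (hNmono : MonotoneOn N (Set.Icc (0 : ℝ) T))
    (hNpos : ∀ t ∈ Set.Icc (0 : ℝ) T, 0 ≤ N t)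
    (hN0 : N 0 ≤ η)
    (hsmall : 16 * K * η * E ^ 2 ≤ 1)
    (hrec : ∀ τ ∈ Set.Icc (0 : ℝ) T, N τ ≤ 4 * η * E →
      N τ ≤ η + (∫ t in (0 : ℝ)..τ, D t * N t)
        + K * sSup (N '' Set.Icc (0 : ℝ) τ) ^ 2) :
    ∀ τ ∈ Set.Icc (0 : ℝ) T, N τ ≤ 2 * η * E := by
  intro τ hτ
  have hT : 0 ≤ T := hτ.1.trans hτ.2
  have hDint' : IntervalIntegrable D volume 0 T :=
    (intervalIntegrable_iff_integrableOn_Icc_of_le hT).2 hDint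
  set g : ℝ → ℝ := fun t ↦ Real.exp (∫ s in (0 : ℝ)..t, D s)
  have hg_mono : MonotoneOn g (Icc 0 T) :=
    Real.exp_monotone.comp_monotoneOn (monotoneOn_integral_of_nonneg hDint' hDpos)
  have hg_cont : ContinuousOn g (Icc 0 T) := by
    simpa [uIcc_of_le hT] using
      (intervalIntegral.continuousOn_primitive_interval' hDint' left_mem_uIcc).rexp
  have hgE : ∀ t ∈ Icc 0 T, g t ≤ E := fun t ht ↦ hE ▸ hg_mono ht (right_mem_Icc.2 hT) ht.2
  have hbound : ∀ c ∈ Ioc (2 * η) (4 * η), N τ ≤ c * g τ := by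
    intro c hc
    have hbase : N 0 ≤ c * g 0 := by
      simp only [g, intervalIntegral.integral_same, Real.exp_zero, mul_one]
      linarith [hc.1]
    refine le_on_Icc_of_forall_le_imp_lt (v := fun t ↦ c * g t) hNcont
      (continuousOn_const.mul hg_cont) hbase (fun t ht hle ↦ ?_) τ hτ
    have hsub : Icc 0 t ⊆ Icc 0 T := Icc_subset_Icc_right ht.2
    exact lt_mul_exp_integral_of_le_mul_exp_integral hη hK ht.1 hc
      (hDint'.mono_set (uIcc_subset_uIcc left_mem_uIcc (Icc_subset_uIcc ht)))
      (fun s hs ↦ hDpos s (hsub hs)) (hNcont.mono hsub) (hNmono.mono hsub) (hNpos t ht)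
      (hgE t ht) hsmall (hrec t ht) hle
  calc N τ ≤ 2 * η * g τ := le_mul_of_forall_Ioc_le_mul (by linarith) hbound
    _ ≤ 2 * η * E := by gcongr; exact hgE τ hτ

/-- abstract continuation/Grönwall argument, the core of §4.4:
if `N` is continuous, nondecreasing and nonnegative on `[0,T]` with `N(0) ≤ η`,
`16KηE² ≤ 1` with `E = exp(∫₀^T D)`, and whenever `N(τ) ≤ 4ηE` one has
`N(τ) ≤ η + ∫₀^τ D·N + K(sup_{[0,τ]} N)²`, then `N(τ) ≤ 2ηE` on `[0,T]`. -/
theorem continuation_gronwall_argument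
    (T η K : ℝ) (hT : 0 < T) (hη : 0 < η) (hK : 0 ≤ K)
    (D : ℝ → ℝ) (hDpos : ∀ t ∈ Set.Icc (0 : ℝ) T, 0 ≤ D t)
    (hDint : IntegrableOn D (Set.Icc (0 : ℝ) T))
    (E : ℝ) (hE : E = Real.exp (∫ t in (0 : ℝ)..T, D t))
    (N : ℝ → ℝ)
    (hNcont : ContinuousOn N (Set.Icc (0 : ℝ) T))
    (hNmono : MonotoneOn N (Set.Icc (0 : ℝ) T))
    (hNpos : ∀ t ∈ Set.Icc (0 : ℝ) T, 0 ≤ N t)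
    (hN0 : N 0 ≤ η)
    (hsmall : 16 * K * η * E ^ 2 ≤ 1)
    (hrec : ∀ τ ∈ Set.Icc (0 : ℝ) T, N τ ≤ 4 * η * E →
      N τ ≤ η + (∫ t in (0 : ℝ)..τ, D t * N t)
        + K * sSup (N '' Set.Icc (0 : ℝ) τ) ^ 2) :
    ∀ τ ∈ Set.Icc (0 : ℝ) T, N τ ≤ 2 * η * E :=
  continuation_gronwall_argument_general T η K hη hK D hDpos hDint E hE N hNcont hNmono hNpos hN0
    hsmall hrec
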